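/- arXiv:1311.2445 — 2 statements merged into one kernel-verified Lean document; each statement's English description precedes it below -/
import Mathlib

section
/- There exist real numbers γ*_j (for j ≠ i), each lying in the closed interval with endpoints r̃_{j,(i)} and r̃_{j,(i)} − Xⱼᵀηᵢ, such that ‖β̂ − β̃ᵢ‖ ≤ (1/τ)·‖𝓡ᵢ‖, where 𝓡ᵢ = (1/n) Σ_{j≠i} [ψ'(γ*_j) − ψ'(r̃_{j,(i)})] Xⱼ Xⱼᵀ ηᵢ. (Indeed f(β̃ᵢ) = 𝓡ᵢ.) -/
noncomputable section

open scoped BigOperators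

/-- View a plain vector as an element of Euclidean space. -/
def toE {p : ℕ} (v : Fin p → ℝ) : EuclideanSpace ℝ (Fin p) := WithLp.toLp 2 v

/-- Residual `ε j - Xⱼᵀβ`. -/
def resid {p n : ℕ} (X : Fin n → EuclideanSpace ℝ (Fin p)) (ε : Fin n → ℝ)
    (β : EuclideanSpace ℝ (Fin p)) (j : Fin n) : ℝ :=
  ε j - ∑ k, X j k * β k

/-- The gradient-type map `f(β) = -(1/n) Σᵢ Xᵢ ψ(εᵢ - Xᵢᵀβ) + τβ`, with `ψ = ρ'`. -/
def fgrad {p n : ℕ} (ρ : ℝ → ℝ) (τ : ℝ) (X : Fin n → EuclideanSpace ℝ (Fin p))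
    (ε : Fin n → ℝ) (β : EuclideanSpace ℝ (Fin p)) : EuclideanSpace ℝ (Fin p) :=
  τ • β - (1 / (n : ℝ)) • ∑ j, deriv ρ (resid X ε β j) • X j

/-- The leave-one-out gradient map `fᵢ(β) = -(1/n) Σ_{j≠i} Xⱼ ψ(εⱼ - Xⱼᵀβ) + τβ`. -/
def fgradLOO {p n : ℕ} (ρ : ℝ → ℝ) (τ : ℝ) (X : Fin n → EuclideanSpace ℝ (Fin p))
    (ε : Fin n → ℝ) (i : Fin n) (β : EuclideanSpace ℝ (Fin p)) :
    EuclideanSpace ℝ (Fin p) :=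
  τ • β - (1 / (n : ℝ)) • ∑ j ∈ Finset.univ.erase i, deriv ρ (resid X ε β j) • X j

/-- `Sᵢ = (1/n) Σ_{j≠i} ψ'(r̃_{j,(i)}) Xⱼ Xⱼᵀ`, where `r̃_{j,(i)}` is the leave-one-out
residual computed from `βi = β̂_{(i)}`. -/
def Smat {p n : ℕ} (ρ : ℝ → ℝ) (X : Fin n → EuclideanSpace ℝ (Fin p)) (ε : Fin n → ℝ)
    (i : Fin n) (βi : EuclideanSpace ℝ (Fin p)) : Matrix (Fin p) (Fin p) ℝ :=
  (1 / (n : ℝ)) • ∑ j ∈ Finset.univ.erase i,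
    deriv (deriv ρ) (resid X ε βi j) • Matrix.vecMulVec (fun k => X j k) (fun k => X j k)

/-- `cᵢ = (1/n) Xᵢᵀ (Sᵢ + τ Id)⁻¹ Xᵢ`. -/
def cval {p n : ℕ} (ρ : ℝ → ℝ) (τ : ℝ) (X : Fin n → EuclideanSpace ℝ (Fin p))
    (ε : Fin n → ℝ) (i : Fin n) (βi : EuclideanSpace ℝ (Fin p)) : ℝ :=
  (1 / (n : ℝ)) * ∑ k, X i k *
    ((Smat ρ X ε i βi + τ • (1 : Matrix (Fin p) (Fin p) ℝ))⁻¹.mulVec (fun l => X i l)) k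

/-- `ηᵢ = (1/n)(Sᵢ + τ Id)⁻¹ Xᵢ ψ(pr)`, where `pr = prox_{cᵢ}(ρ)(r̃_{i,(i)})`. -/
def etaVec {p n : ℕ} (ρ : ℝ → ℝ) (τ : ℝ) (X : Fin n → EuclideanSpace ℝ (Fin p))
    (ε : Fin n → ℝ) (i : Fin n) (βi : EuclideanSpace ℝ (Fin p)) (pr : ℝ) :
    EuclideanSpace ℝ (Fin p) :=
  ((1 / (n : ℝ)) * deriv ρ pr) •
    toE ((Smat ρ X ε i βi + τ • (1 : Matrix (Fin p) (Fin p) ℝ))⁻¹.mulVec (fun l => X i l))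

/-!
Since `ρ` is convex, `ψ` is nondecreasing, so `f` is `τ`-strongly monotone; as `f(β̂) = 0` this
gives `‖β̂ - β‖ ≤ ‖f(β)‖ / τ` for every `β`. At `β = β̃ᵢ` one splits off the `i`-th term of `f`:
the prox equation makes the `i`-th residual at `β̃ᵢ` equal to `prox_{cᵢ}(ρ)(r̃_{i,(i)})`, and the
mean value theorem for `ψ` on the other residuals, combined with `fᵢ(β̂₍ᵢ₎) = 0` and
`(Sᵢ + τ Id) ηᵢ = (1/n) ψ(prox) Xᵢ`, leaves exactly `f(β̃ᵢ) = 𝓡ᵢ`.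
-/

open Finset
open scoped Matrix

theorem exists_mem_uIcc_sub_eq_deriv_mul {f : ℝ → ℝ} (hf : Differentiable ℝ f) (a b : ℝ) :
    ∃ c ∈ Set.uIcc a b, f b - f a = deriv f c * (b - a) := by
  wlog hab : a ≤ b generalizing a b
  · obtain ⟨c, hc, h⟩ := this b a (le_of_not_ge hab)
    exact ⟨c, Set.uIcc_comm a b ▸ hc, by linear_combination -h⟩
  rcases hab.eq_or_lt with rfl | hab
  · exact ⟨a, Set.left_mem_uIcc, by ring⟩
  obtain ⟨c, hc, h⟩ := exists_deriv_eq_slope f hab hf.continuous.continuousOn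
    (hf.differentiableOn.mono Set.Ioo_subset_Icc_self)
  refine ⟨c, Set.Icc_subset_uIcc (Set.Ioo_subset_Icc_self hc), ?_⟩
  rw [h, div_mul_cancel₀ _ (sub_ne_zero.2 hab.ne')]

theorem norm_sub_le_of_strongly_monotone {E : Type*} [NormedAddCommGroup E]
    [InnerProductSpace ℝ E] {F : E → E} {τ : ℝ} (hτ : 0 < τ)
    (hF : ∀ x y, τ * ‖x - y‖ ^ 2 ≤ inner ℝ (F x - F y) (x - y)) {x : E} (hx : F x = 0) (y : E) :
    ‖x - y‖ ≤ 1 / τ * ‖F y‖ := by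
  have h : τ * ‖x - y‖ ^ 2 ≤ ‖F y‖ * ‖x - y‖ := by
    calc τ * ‖x - y‖ ^ 2 ≤ inner ℝ (F x - F y) (x - y) := hF x y
      _ ≤ ‖F x - F y‖ * ‖x - y‖ := real_inner_le_norm _ _
      _ = ‖F y‖ * ‖x - y‖ := by rw [hx, zero_sub, norm_neg]
  rw [one_div_mul_eq_div, le_div_iff₀ hτ]
  rcases (norm_nonneg (x - y)).eq_or_lt with h0 | hpos
  · simp [← h0]
  · nlinarith

section

variable {p n : ℕ} (ρ : ℝ → ℝ) (τ : ℝ) (X : Fin n → EuclideanSpace ℝ (Fin p)) (ε : Fin n → ℝ)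
  (i : Fin n) (βi : EuclideanSpace ℝ (Fin p))

theorem inner_eq_sum_mul (x y : EuclideanSpace ℝ (Fin p)) :
    inner ℝ x y = ∑ k, x k * y k := by
  simp [PiLp.inner_apply, mul_comm]

theorem inner_sub_eq_resid_sub (b₁ b₂ : EuclideanSpace ℝ (Fin p)) (j : Fin n) :
    inner ℝ (X j) (b₁ - b₂) = resid X ε b₂ j - resid X ε b₁ j := by
  simp only [inner_eq_sum_mul, resid, PiLp.sub_apply, mul_sub, sum_sub_distrib]
  ring

theorem resid_add (β η : EuclideanSpace ℝ (Fin p)) (j : Fin n) :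
    resid X ε (β + η) j = resid X ε β j - ∑ k, X j k * η k := by
  simp only [resid, PiLp.add_apply, mul_add, sum_add_distrib]
  ring

theorem fgrad_sub_fgrad (b₁ b₂ : EuclideanSpace ℝ (Fin p)) :
    fgrad ρ τ X ε b₁ - fgrad ρ τ X ε b₂ = τ • (b₁ - b₂) -
      (1 / (n : ℝ)) • ∑ j, (deriv ρ (resid X ε b₁ j) - deriv ρ (resid X ε b₂ j)) • X j := by
  simp only [fgrad, sub_smul, sum_sub_distrib, smul_sub]
  abel

theorem fgrad_strongly_monotone (hψ : Monotone (deriv ρ)) (b₁ b₂ : EuclideanSpace ℝ (Fin p)) :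
    τ * ‖b₁ - b₂‖ ^ 2 ≤ inner ℝ (fgrad ρ τ X ε b₁ - fgrad ρ τ X ε b₂) (b₁ - b₂) := by
  have hterm : ∀ j, (deriv ρ (resid X ε b₁ j) - deriv ρ (resid X ε b₂ j)) *
      (resid X ε b₂ j - resid X ε b₁ j) ≤ 0 := fun j => by
    rcases le_total (resid X ε b₁ j) (resid X ε b₂ j) with h | h
    · exact mul_nonpos_of_nonpos_of_nonneg (sub_nonpos.2 (hψ h)) (sub_nonneg.2 h)
    · exact mul_nonpos_of_nonneg_of_nonpos (sub_nonneg.2 (hψ h)) (sub_nonpos.2 h)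
  rw [fgrad_sub_fgrad, inner_sub_left, inner_smul_left, inner_smul_left, sum_inner,
    real_inner_self_eq_norm_sq]
  simp only [inner_smul_left, inner_sub_eq_resid_sub X ε, RCLike.conj_to_real]
  exact (le_sub_self_iff _).2 <| mul_nonpos_of_nonneg_of_nonpos (by positivity) <|
    sum_nonpos fun j _ => hterm j

theorem posSemidef_Smat (hψ' : ∀ x, 0 ≤ deriv (deriv ρ) x) : (Smat ρ X ε i βi).PosSemidef :=
  Matrix.PosSemidef.smul (Matrix.posSemidef_sum _ fun j _ =>
    (Matrix.posSemidef_vecMulVec_self_star _).smul (hψ' _)) (by positivity)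

theorem isUnit_det_Smat_add_smul_one (hψ' : ∀ x, 0 ≤ deriv (deriv ρ) x) (hτ : 0 < τ) :
    IsUnit (Smat ρ X ε i βi + τ • (1 : Matrix (Fin p) (Fin p) ℝ)).det :=
  (Matrix.isUnit_iff_isUnit_det _).mp
    (Matrix.PosDef.posSemidef_add (posSemidef_Smat ρ X ε i βi hψ')
      (Matrix.PosDef.one.smul hτ)).isUnit

theorem toE_Smat_mulVec (v : Fin p → ℝ) :
    toE (Smat ρ X ε i βi *ᵥ v) = (1 / (n : ℝ)) • ∑ j ∈ univ.erase i,
      (deriv (deriv ρ) (resid X ε βi j) * ∑ k, X j k * v k) • X j := by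
  simp only [Smat, Matrix.smul_mulVec, Matrix.sum_mulVec,
    Matrix.vecMulVec_mulVec, op_smul_eq_smul, toE, WithLp.toLp_smul, WithLp.toLp_sum, smul_smul]
  rfl

-- `(Sᵢ + τ Id) ηᵢ = (1/n) ψ(pr) Xᵢ`, written out in Euclidean space.
theorem Smat_add_smul_one_etaVec (pr : ℝ)
    (hM : IsUnit (Smat ρ X ε i βi + τ • (1 : Matrix (Fin p) (Fin p) ℝ)).det) :
    τ • etaVec ρ τ X ε i βi pr + (1 / (n : ℝ)) • ∑ j ∈ univ.erase i,
      (deriv (deriv ρ) (resid X ε βi j) * ∑ k, X j k * etaVec ρ τ X ε i βi pr k) • X j =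
      ((1 / (n : ℝ)) * deriv ρ pr) • X i := by
  set a := (1 / (n : ℝ)) * deriv ρ pr
  set w := (Smat ρ X ε i βi + τ • (1 : Matrix (Fin p) (Fin p) ℝ))⁻¹ *ᵥ fun l => X i l
  have hw : toE ((Smat ρ X ε i βi + τ • 1) *ᵥ w) = X i := by
    rw [Matrix.mulVec_mulVec, Matrix.mul_nonsing_inv _ hM, Matrix.one_mulVec]
    rfl
  rw [Matrix.add_mulVec, Matrix.smul_mulVec, Matrix.one_mulVec, toE, WithLp.toLp_add,
    WithLp.toLp_smul, ← toE, toE_Smat_mulVec] at hw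
  have hη : etaVec ρ τ X ε i βi pr = a • toE w := rfl
  have hsum : ∑ j ∈ univ.erase i,
      (deriv (deriv ρ) (resid X ε βi j) * ∑ k, X j k * etaVec ρ τ X ε i βi pr k) • X j =
      a • ∑ j ∈ univ.erase i, (deriv (deriv ρ) (resid X ε βi j) * ∑ k, X j k * w k) • X j := by
    rw [smul_sum]
    refine sum_congr rfl fun j _ => ?_
    simp only [hη, PiLp.smul_apply, smul_eq_mul, smul_smul, toE]
    congr 1
    simp only [mul_left_comm _ a, ← mul_sum]
  rw [hsum, hη, toE, ← hw]
  module

theorem sum_mul_etaVec (pr : ℝ) :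
    ∑ k, X i k * etaVec ρ τ X ε i βi pr k = cval ρ τ X ε i βi * deriv ρ pr := by
  simp only [etaVec, cval, PiLp.smul_apply, smul_eq_mul, toE, mul_sum, sum_mul]
  exact sum_congr rfl fun k _ => by ring

theorem fgrad_eq_fgradLOO_sub (β : EuclideanSpace ℝ (Fin p)) :
    fgrad ρ τ X ε β =
      fgradLOO ρ τ X ε i β - (1 / (n : ℝ)) • deriv ρ (resid X ε β i) • X i := by
  rw [fgrad, fgradLOO, ← add_sum_erase _ _ (mem_univ i)]
  module

theorem fgrad_add_etaVec (hβi : fgradLOO ρ τ X ε i βi = 0) (pr : ℝ)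
    (hpr : pr + cval ρ τ X ε i βi * deriv ρ pr = resid X ε βi i)
    (hM : IsUnit (Smat ρ X ε i βi + τ • (1 : Matrix (Fin p) (Fin p) ℝ)).det) (γ : Fin n → ℝ)
    (hγ : ∀ j, j ≠ i →
      deriv ρ (resid X ε βi j - ∑ k, X j k * etaVec ρ τ X ε i βi pr k) - deriv ρ (resid X ε βi j) =
        deriv (deriv ρ) (γ j) *
          (resid X ε βi j - ∑ k, X j k * etaVec ρ τ X ε i βi pr k - resid X ε βi j)) :
    fgrad ρ τ X ε (βi + etaVec ρ τ X ε i βi pr) =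
      (1 / (n : ℝ)) • ∑ j ∈ univ.erase i,
        ((deriv (deriv ρ) (γ j) - deriv (deriv ρ) (resid X ε βi j)) *
          ∑ k, X j k * etaVec ρ τ X ε i βi pr k) • X j := by
  set η := etaVec ρ τ X ε i βi pr
  have hi : resid X ε (βi + η) i = pr := by
    rw [resid_add, sum_mul_etaVec]
    linarith
  have hsum : ∑ j ∈ univ.erase i, deriv ρ (resid X ε (βi + η) j) • X j =
      ∑ j ∈ univ.erase i, deriv ρ (resid X ε βi j) • X j -
        ∑ j ∈ univ.erase i, (deriv (deriv ρ) (resid X ε βi j) * ∑ k, X j k * η k) • X j -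
        ∑ j ∈ univ.erase i, ((deriv (deriv ρ) (γ j) - deriv (deriv ρ) (resid X ε βi j)) *
          ∑ k, X j k * η k) • X j := by
    simp only [← sum_sub_distrib, ← sub_smul]
    refine sum_congr rfl fun j hj => ?_
    rw [resid_add]
    congr 1
    linear_combination hγ j (ne_of_mem_erase hj)
  rw [fgradLOO] at hβi
  rw [fgrad_eq_fgradLOO_sub ρ τ X ε i, hi, fgradLOO, hsum]
  linear_combination (norm := module) hβi + Smat_add_smul_one_etaVec ρ τ X ε i βi pr hM

end

theorem statement4_general {p n : ℕ} (ρ : ℝ → ℝ) (τ : ℝ) (hτ : 0 < τ)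
    (hρconv : ConvexOn ℝ Set.univ ρ) (hρsmooth : ContDiff ℝ 2 ρ)
    (X : Fin n → EuclideanSpace ℝ (Fin p)) (ε : Fin n → ℝ) (i : Fin n)
    (βhat βi : EuclideanSpace ℝ (Fin p))
    (hβhat : fgrad ρ τ X ε βhat = 0)
    (hβi : fgradLOO ρ τ X ε i βi = 0)
    -- `pr` is the prox value: the unique `y` with `y + cᵢ ψ(y) = r̃_{i,(i)}`
    (pr : ℝ)
    (hpr : pr + cval ρ τ X ε i βi * deriv ρ pr = resid X ε βi i) :
    ∃ γ : Fin n → ℝ,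
      (∀ j, j ≠ i → γ j ∈ Set.uIcc (resid X ε βi j)
          (resid X ε βi j - ∑ k, X j k * etaVec ρ τ X ε i βi pr k)) ∧
      ‖βhat - (βi + etaVec ρ τ X ε i βi pr)‖ ≤ (1 / τ) *
        ‖(1 / (n : ℝ)) • ∑ j ∈ Finset.univ.erase i,
            ((deriv (deriv ρ) (γ j) - deriv (deriv ρ) (resid X ε βi j)) *
              (∑ k, X j k * etaVec ρ τ X ε i βi pr k)) • X j‖ := by
  have hψ : Monotone (deriv ρ) := monotoneOn_univ.mp <| hρconv.monotoneOn_deriv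
    fun x _ => (hρsmooth.differentiable two_ne_zero).differentiableAt
  have hM := isUnit_det_Smat_add_smul_one ρ τ X ε i βi (fun _ => hψ.deriv_nonneg) hτ
  choose γ hγmem hγ using fun j => exists_mem_uIcc_sub_eq_deriv_mul
    hρsmooth.differentiable_deriv_two (resid X ε βi j)
    (resid X ε βi j - ∑ k, X j k * etaVec ρ τ X ε i βi pr k)
  refine ⟨γ, fun j _ => hγmem j, ?_⟩
  rw [← fgrad_add_etaVec ρ τ X ε i βi hβi pr hpr hM γ fun j _ => hγ j]
  exact norm_sub_le_of_strongly_monotone hτ (fgrad_strongly_monotone ρ τ X ε hψ) hβhat _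

theorem statement4 {p n : ℕ} (ρ : ℝ → ℝ) (τ : ℝ) (hτ : 0 < τ)
    (hρconv : ConvexOn ℝ Set.univ ρ) (hρsmooth : ContDiff ℝ 2 ρ)
    (hρnonneg : ∀ x, 0 ≤ ρ x) (hρzero : ρ 0 = 0)
    (hsgn : ∀ x : ℝ, x ≠ 0 → Real.sign (deriv ρ x) = Real.sign x)
    (X : Fin n → EuclideanSpace ℝ (Fin p)) (ε : Fin n → ℝ) (i : Fin n)
    (βhat βi : EuclideanSpace ℝ (Fin p))
    (hβhat : fgrad ρ τ X ε βhat = 0)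
    (hβi : fgradLOO ρ τ X ε i βi = 0)
    -- `pr` is the prox value: the unique `y` with `y + cᵢ ψ(y) = r̃_{i,(i)}`
    (pr : ℝ)
    (hpr : pr + cval ρ τ X ε i βi * deriv ρ pr = resid X ε βi i) :
    ∃ γ : Fin n → ℝ,
      (∀ j, j ≠ i → γ j ∈ Set.uIcc (resid X ε βi j)
          (resid X ε βi j - ∑ k, X j k * etaVec ρ τ X ε i βi pr k)) ∧
      ‖βhat - (βi + etaVec ρ τ X ε i βi pr)‖ ≤ (1 / τ) *
        ‖(1 / (n : ℝ)) • ∑ j ∈ Finset.univ.erase i,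
            ((deriv (deriv ρ) (γ j) - deriv (deriv ρ) (resid X ε βi j)) *
              (∑ k, X j k * etaVec ρ τ X ε i βi pr k)) • X j‖ :=
  statement4_general ρ τ hτ hρconv hρsmooth X ε i βhat βi hβhat hβi pr hpr
end
end

section
/- Let Rᵢ = εᵢ − Xᵢᵀβ̂ be the i-th residual of the full problem and r̃_{i,(i)} = εᵢ − Xᵢᵀβ̂_{(i)} the i-th leave-one-out residual. Then the deterministic bounds |r̃_{i,(i)} − Rᵢ| ≤ (‖Xᵢ‖²/n)·(1/τ)·|ψ(r̃_{i,(i)})| and hence |Rᵢ| ≤ |r̃_{i,(i)}| + (‖Xᵢ‖²/n)·(1/τ)·|ψ(r̃_{i,(i)})| hold. -/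
noncomputable section

open scoped BigOperators

open Finset
open scoped RealInnerProductSpace

/-
Subtracting the two stationarity equations and pairing with `d = β̂ - β̂₍ᵢ₎` gives
`τ‖d‖² = (1/n) (Σⱼ ψ(Rⱼ)⟪Xⱼ, d⟫ - Σ_{j≠i} ψ(r̃ⱼ)⟪Xⱼ, d⟫)` with `Rⱼ = r̃ⱼ - ⟪Xⱼ, d⟫`. Monotonicity of `ψ`
makes every term `j ≠ i` nonpositive, leaving `τ‖d‖² ≤ (1/n) ψ(r̃ᵢ)⟪Xᵢ, d⟫`. Cauchy–Schwarz
`|r̃ᵢ - Rᵢ| = |⟪Xᵢ, d⟫| ≤ ‖Xᵢ‖‖d‖` then turns this quadratic bound into a linear one.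
-/

lemma resid_eq_sub_inner {p n : ℕ} (X : Fin n → EuclideanSpace ℝ (Fin p)) (ε : Fin n → ℝ)
    (β : EuclideanSpace ℝ (Fin p)) (j : Fin n) : resid X ε β j = ε j - ⟪X j, β⟫ := by
  simp only [resid, PiLp.inner_apply, RCLike.inner_apply, conj_trivial, mul_comm]

lemma Monotone.apply_sub_mul_le {ψ : ℝ → ℝ} (hψ : Monotone ψ) (r t : ℝ) :
    ψ (r - t) * t ≤ ψ r * t := by
  rcases le_total 0 t with ht | ht
  · exact mul_le_mul_of_nonneg_right (hψ (by linarith)) ht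
  · exact mul_le_mul_of_nonpos_right (hψ (by linarith)) ht

lemma le_sq_mul_div_of_le_mul_of_mul_sq_le {a M D K τ : ℝ} (hτ : 0 < τ) (hK : 0 ≤ K)
    (ha : 0 ≤ a) (haMD : a ≤ M * D) (hD : τ * D ^ 2 ≤ K * a) : a ≤ M ^ 2 * K / τ := by
  rw [le_div_iff₀ hτ]
  rcases ha.eq_or_lt with rfl | ha_pos
  · simpa using mul_nonneg (sq_nonneg M) hK
  have hsq : a ^ 2 ≤ M ^ 2 * D ^ 2 := by
    rw [← mul_pow]; exact pow_le_pow_left₀ ha haMD 2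
  have : a * (a * τ) ≤ a * (M ^ 2 * K) := by nlinarith [mul_le_mul_of_nonneg_left hD (sq_nonneg M)]
  exact le_of_mul_le_mul_left this ha_pos

lemma inner_smul_sum_smul {E ι : Type*} [NormedAddCommGroup E] [InnerProductSpace ℝ E] (c : ℝ)
    (s : Finset ι) (a : ι → ℝ) (x : ι → E) (d : E) :
    ⟪c • ∑ j ∈ s, a j • x j, d⟫ = c * ∑ j ∈ s, a j * ⟪x j, d⟫ := by
  simp only [real_inner_smul_left, sum_inner]

section LeaveOneOut

variable {E ι : Type*} [NormedAddCommGroup E] [InnerProductSpace ℝ E] [Fintype ι] [DecidableEq ι]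
  {ψ : ℝ → ℝ} {x : ι → E} {e : ι → ℝ} {τ c : ℝ} {i : ι} {b b' : E}

lemma mul_norm_sub_sq_le_of_leaveOneOut (hψ : Monotone ψ) (hc : 0 ≤ c)
    (hb : τ • b = c • ∑ j, ψ (e j - ⟪x j, b⟫) • x j)
    (hb' : τ • b' = c • ∑ j ∈ univ.erase i, ψ (e j - ⟪x j, b'⟫) • x j) :
    τ * ‖b - b'‖ ^ 2 ≤ c * (ψ (e i - ⟪x i, b'⟫) * ⟪x i, b - b'⟫) := by
  set r : ι → ℝ := fun j ↦ e j - ⟪x j, b'⟫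
  set t : ι → ℝ := fun j ↦ ⟪x j, b - b'⟫
  have hR : ∀ j, e j - ⟪x j, b⟫ = r j - t j := fun j ↦ by
    simp only [r, t, inner_sub_right]; ring
  have hpair : τ * ‖b - b'‖ ^ 2 =
      c * (∑ j, ψ (r j - t j) * t j - ∑ j ∈ univ.erase i, ψ (r j) * t j) := by
    rw [← real_inner_self_eq_norm_sq, ← real_inner_smul_left, smul_sub, hb, hb', inner_sub_left,
      inner_smul_sum_smul, inner_smul_sum_smul, mul_sub]
    simp only [hR, r, t]
  have hmono : ∑ j, ψ (r j - t j) * t j ≤ ∑ j, ψ (r j) * t j :=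
    sum_le_sum fun j _ ↦ hψ.apply_sub_mul_le (r j) (t j)
  have hsplit : ∑ j, ψ (r j) * t j - ∑ j ∈ univ.erase i, ψ (r j) * t j = ψ (r i) * t i := by
    rw [← sum_erase_add _ _ (mem_univ i)]; ring
  rw [hpair]
  exact mul_le_mul_of_nonneg_left (hsplit ▸ sub_le_sub_right hmono _) hc

lemma abs_inner_le_of_leaveOneOut (hψ : Monotone ψ) (hc : 0 ≤ c) (hτ : 0 < τ)
    (hb : τ • b = c • ∑ j, ψ (e j - ⟪x j, b⟫) • x j)
    (hb' : τ • b' = c • ∑ j ∈ univ.erase i, ψ (e j - ⟪x j, b'⟫) • x j) :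
    |⟪x i, b - b'⟫| ≤ ‖x i‖ ^ 2 * (c * |ψ (e i - ⟪x i, b'⟫)|) / τ := by
  refine le_sq_mul_div_of_le_mul_of_mul_sq_le hτ (by positivity) (abs_nonneg _)
    (abs_real_inner_le_norm _ _) ?_
  calc τ * ‖b - b'‖ ^ 2 ≤ c * (ψ (e i - ⟪x i, b'⟫) * ⟪x i, b - b'⟫) :=
        mul_norm_sub_sq_le_of_leaveOneOut hψ hc hb hb'
    _ ≤ c * |ψ (e i - ⟪x i, b'⟫) * ⟪x i, b - b'⟫| := mul_le_mul_of_nonneg_left (le_abs_self _) hc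
    _ = c * |ψ (e i - ⟪x i, b'⟫)| * |⟪x i, b - b'⟫| := by rw [abs_mul, mul_assoc]

end LeaveOneOut

theorem statement6_general {p n : ℕ} (ρ : ℝ → ℝ) (τ : ℝ) (hτ : 0 < τ)
    (hρconv : ConvexOn ℝ Set.univ ρ) (hρsmooth : ContDiff ℝ 2 ρ)
    (X : Fin n → EuclideanSpace ℝ (Fin p)) (ε : Fin n → ℝ) (i : Fin n)
    (βhat βi : EuclideanSpace ℝ (Fin p))
    (hβhat : fgrad ρ τ X ε βhat = 0)
    (hβi : fgradLOO ρ τ X ε i βi = 0) :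
    |resid X ε βi i - resid X ε βhat i| ≤
      (‖X i‖ ^ 2 / (n : ℝ)) * (1 / τ) * |deriv ρ (resid X ε βi i)| ∧
    |resid X ε βhat i| ≤ |resid X ε βi i| +
      (‖X i‖ ^ 2 / (n : ℝ)) * (1 / τ) * |deriv ρ (resid X ε βi i)| := by
  have hψ : Monotone (deriv ρ) := monotoneOn_univ.mp <| hρconv.monotoneOn_deriv fun x _ ↦
    (hρsmooth.differentiable (by norm_num)).differentiableAt
  rw [fgrad, sub_eq_zero] at hβhat
  rw [fgradLOO, sub_eq_zero] at hβi
  simp only [resid_eq_sub_inner] at hβhat hβi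
  have hloo : |resid X ε βi i - resid X ε βhat i| ≤
      (‖X i‖ ^ 2 / (n : ℝ)) * (1 / τ) * |deriv ρ (resid X ε βi i)| := by
    have hdiff : resid X ε βi i - resid X ε βhat i = ⟪X i, βhat - βi⟫ := by
      rw [resid_eq_sub_inner, resid_eq_sub_inner, inner_sub_right]; ring
    rw [hdiff, resid_eq_sub_inner]
    convert abs_inner_le_of_leaveOneOut hψ (by positivity) hτ hβhat hβi using 1
    ring
  refine ⟨hloo, ?_⟩
  have htri := abs_sub_abs_le_abs_sub (resid X ε βhat i) (resid X ε βi i)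
  rw [abs_sub_comm] at htri
  linarith

theorem statement6 {p n : ℕ} (ρ : ℝ → ℝ) (τ : ℝ) (hτ : 0 < τ)
    (hρconv : ConvexOn ℝ Set.univ ρ) (hρsmooth : ContDiff ℝ 2 ρ)
    (hρnonneg : ∀ x, 0 ≤ ρ x) (hρzero : ρ 0 = 0)
    (X : Fin n → EuclideanSpace ℝ (Fin p)) (ε : Fin n → ℝ) (i : Fin n)
    (βhat βi : EuclideanSpace ℝ (Fin p))
    (hβhat : fgrad ρ τ X ε βhat = 0)
    (hβi : fgradLOO ρ τ X ε i βi = 0) :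
    |resid X ε βi i - resid X ε βhat i| ≤
      (‖X i‖ ^ 2 / (n : ℝ)) * (1 / τ) * |deriv ρ (resid X ε βi i)| ∧
    |resid X ε βhat i| ≤ |resid X ε βi i| +
      (‖X i‖ ^ 2 / (n : ℝ)) * (1 / τ) * |deriv ρ (resid X ε βi i)| :=
  statement6_general ρ τ hτ hρconv hρsmooth X ε i βhat βi hβhat hβi
end
end
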